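/- arXiv:1607.06176 — 3 statements merged into one kernel-verified Lean document; each statement's English description precedes it below -/
import Mathlib

section
/- Let u, v be real-valued functions on V_m, let ũ : V_{m+1} → ℝ be the harmonic (1/5–2/5) extension of u, i.e. ũ restricted to V_m equals u and for every word ω ∈ {1,2,3}^m and every permutation (i,j,k) of (1,2,3), ũ(P_ω(P_i(q_j))) = (2/5)u(P_ω(q_i)) + (2/5)u(P_ω(q_j)) + (1/5)u(P_ω(q_k)); and let v′ : V_{m+1} → ℝ be any extension of v (i.e. v′ restricted to V_m equals v). Then E_{m+1}(ũ, v′) = E_m(u, v). -/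
open Finset Filter

noncomputable section

/-- Points in the plane. -/
abbrev Pt := Fin 2 → ℝ

/-- The three contraction maps `P_i(x) = (x + q_i)/2`. -/
def Pmap (q : Fin 3 → Pt) (i : Fin 3) (x : Pt) : Pt := (x + q i) / 2

/-- `Pw q m ω = P_{ω 0} ∘ P_{ω 1} ∘ ⋯ ∘ P_{ω (m-1)}` for a word `ω` of length `m`. -/
def Pw (q : Fin 3 → Pt) : (m : ℕ) → (Fin m → Fin 3) → Pt → Pt
  | 0, _, x => x
  | m + 1, ω, x => Pmap q (ω 0) (Pw q m (fun k => ω k.succ) x)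

/-- The level-`m` vertex set `V_m`. -/
def V (q : Fin 3 → Pt) (m : ℕ) : Set Pt :=
  {x | ∃ ω : Fin m → Fin 3, ∃ i : Fin 3, x = Pw q m ω (q i)}

/-- `V_* = ⋃ m, V_m`. -/
def Vstar (q : Fin 3 → Pt) : Set Pt := ⋃ m, V q m

/-- The Sierpinski gasket, as the closure of `V_*`. -/
def SG (q : Fin 3 → Pt) : Set Pt := closure (Vstar q)

/-- The level-`m` graph energy. -/
def energy (q : Fin 3 → Pt) (m : ℕ) (u : Pt → ℝ) : ℝ :=
  (5/3 : ℝ)^m * ∑ ω : Fin m → Fin 3,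
    ∑ p ∈ Finset.univ.filter (fun p : Fin 3 × Fin 3 => p.1 < p.2),
      (u (Pw q m ω (q p.1)) - u (Pw q m ω (q p.2)))^2

/-- The level-`m` bilinear graph energy. -/
def energyBil (q : Fin 3 → Pt) (m : ℕ) (u v : Pt → ℝ) : ℝ :=
  (5/3 : ℝ)^m * ∑ ω : Fin m → Fin 3,
    ∑ p ∈ Finset.univ.filter (fun p : Fin 3 × Fin 3 => p.1 < p.2),
      (u (Pw q m ω (q p.1)) - u (Pw q m ω (q p.2))) *
        (v (Pw q m ω (q p.1)) - v (Pw q m ω (q p.2)))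

open scoped Classical in
/-- The level-`m` graph Laplacian at `x`. -/
def graphLap (q : Fin 3 → Pt) (m : ℕ) (u : Pt → ℝ) (x : Pt) : ℝ :=
  ∑ ω : Fin m → Fin 3,
    ∑ p ∈ Finset.univ.filter (fun p : Fin 3 × Fin 3 => p.1 ≠ p.2 ∧ Pw q m ω (q p.1) = x),
      (u (Pw q m ω (q p.2)) - u x)

/-- A function is harmonic on `SG` if it is continuous on `SG` and satisfies
the `1/5-2/5` rule. -/
def IsHarmonic (q : Fin 3 → Pt) (h : Pt → ℝ) : Prop :=
  ContinuousOn h (SG q) ∧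
  ∀ (m : ℕ) (ω : Fin m → Fin 3) (i j k : Fin 3), i ≠ j → j ≠ k → i ≠ k →
    h (Pw q m ω (Pmap q i (q j))) =
      2/5 * h (Pw q m ω (q i)) + 2/5 * h (Pw q m ω (q j)) + 1/5 * h (Pw q m ω (q k))

/-- `f` is a fractal interpolation function on `SG` with vertical scaling factors `d i`. -/
def IsFIF (q : Fin 3 → Pt) (d : Fin 3 → ℝ) (f : Pt → ℝ) : Prop :=
  ContinuousOn f (SG q) ∧
  ∃ h : Fin 3 → Pt → ℝ, (∀ i, IsHarmonic q (h i)) ∧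
    ∀ i, ∀ x ∈ SG q, f (Pmap q i x) = d i * f x + h i x

/-! Splitting a word of length `m + 1` into a word of length `m` and a last letter writes
`E_{m+1}` as a sum over the level-`m` cells of the energies of their three subcells. On one cell,
the `1/5–2/5` values are exactly those that make `ũ` harmonic at the three new vertices, so in the
bilinear form the coefficients of `v′` at those vertices cancel (discrete Gauss–Green), and what
remains is `3/5` of the energy of the cell; the factor `5/3` of the renormalization absorbs it. -/

lemma Pmap_self (q : Fin 3 → Pt) (i : Fin 3) : Pmap q i (q i) = q i := by
  funext t
  simp only [Pmap, Pi.div_apply, Pi.add_apply]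
  norm_num

lemma Pmap_comm (q : Fin 3 → Pt) (i j : Fin 3) : Pmap q i (q j) = Pmap q j (q i) := by
  simp only [Pmap, add_comm]

lemma Pw_snoc (q : Fin 3 → Pt) (m : ℕ) (σ : Fin m → Fin 3) (i : Fin 3) (x : Pt) :
    Pw q (m + 1) (Fin.snoc σ i) x = Pw q m σ (Pmap q i x) := by
  induction m with
  | zero => rfl
  | succ n ih =>
    induction σ using Fin.consCases with
    | cons a τ =>
      rw [← Fin.cons_snoc_eq_snoc_cons]
      exact congrArg (Pmap q a) (ih τ)

def triangleForm (a b : Fin 3 → ℝ) : ℝ :=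
  ∑ p ∈ univ.filter (fun p : Fin 3 × Fin 3 => p.1 < p.2), (a p.1 - a p.2) * (b p.1 - b p.2)

lemma triangleForm_eq (a b : Fin 3 → ℝ) :
    triangleForm a b =
      (a 0 - a 1) * (b 0 - b 1) + (a 0 - a 2) * (b 0 - b 2) + (a 1 - a 2) * (b 1 - b 2) := by
  have hpairs : univ.filter (fun p : Fin 3 × Fin 3 => p.1 < p.2) = {(0, 1), (0, 2), (1, 2)} := by
    decide
  rw [triangleForm, hpairs, sum_insert (by decide), sum_insert (by decide), sum_singleton, add_assoc]

/- `A i j` and `B i j` are the values at `P_i(q_j)`, so the diagonal holds the vertex values of the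
triangle and the off-diagonal entries its edge midpoints, each listed twice. -/
lemma sum_triangleForm_of_harmonic (A B : Fin 3 → Fin 3 → ℝ) (hB : ∀ i j, B i j = B j i)
    (hA : ∀ i j k, i ≠ j → j ≠ k → i ≠ k → A i j = 2/5 * A i i + 2/5 * A j j + 1/5 * A k k) :
    ∑ i, triangleForm (A i) (B i) = 3/5 * triangleForm (fun i => A i i) (fun i => B i i) := by
  simp only [Fin.sum_univ_three, triangleForm_eq]
  rw [hA 0 1 2, hA 0 2 1, hA 1 0 2, hA 1 2 0, hA 2 0 1, hA 2 1 0, hB 1 0, hB 2 0, hB 2 1]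
  · ring
  all_goals decide

lemma energyBil_eq (q : Fin 3 → Pt) (m : ℕ) (u v : Pt → ℝ) :
    energyBil q m u v =
      (5/3)^m * ∑ ω, triangleForm (fun i => u (Pw q m ω (q i))) (fun i => v (Pw q m ω (q i))) :=
  rfl

lemma energyBil_congr (q : Fin 3 → Pt) (m : ℕ) {u u' v v' : Pt → ℝ}
    (hu : ∀ x ∈ V q m, u x = u' x) (hv : ∀ x ∈ V q m, v x = v' x) :
    energyBil q m u v = energyBil q m u' v' := by
  simp only [energyBil_eq]
  refine congrArg _ (sum_congr rfl fun ω _ => ?_)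
  congr 1 <;> funext i
  exacts [hu _ ⟨ω, i, rfl⟩, hv _ ⟨ω, i, rfl⟩]

lemma energyBil_succ (q : Fin 3 → Pt) (m : ℕ) (u v : Pt → ℝ) :
    energyBil q (m + 1) u v = (5/3)^(m + 1) * ∑ σ : Fin m → Fin 3, ∑ i,
      triangleForm (fun j => u (Pw q m σ (Pmap q i (q j))))
        (fun j => v (Pw q m σ (Pmap q i (q j)))) := by
  rw [energyBil_eq, ← (Fin.snocEquiv fun _ => Fin 3).sum_comp, Fintype.sum_prod_type, sum_comm]
  simp only [Fin.snocEquiv, Equiv.coe_fn_mk, Pw_snoc]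

lemma energyBil_succ_of_harmonic (q : Fin 3 → Pt) (m : ℕ) (u v : Pt → ℝ)
    (hu : ∀ (ω : Fin m → Fin 3) (i j k : Fin 3), i ≠ j → j ≠ k → i ≠ k →
      u (Pw q m ω (Pmap q i (q j))) =
        2/5 * u (Pw q m ω (q i)) + 2/5 * u (Pw q m ω (q j)) + 1/5 * u (Pw q m ω (q k))) :
    energyBil q (m + 1) u v = energyBil q m u v := by
  have hcell (σ : Fin m → Fin 3) := sum_triangleForm_of_harmonic
    (fun i j => u (Pw q m σ (Pmap q i (q j)))) (fun i j => v (Pw q m σ (Pmap q i (q j))))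
    (fun i j => by rw [Pmap_comm])
    (fun i j k hij hjk hik => by simp only [Pmap_self]; exact hu σ i j k hij hjk hik)
  simp only [Pmap_self] at hcell
  rw [energyBil_succ, energyBil_eq, sum_congr rfl fun σ _ => hcell σ, ← mul_sum, pow_succ]
  ring

theorem stmt_0_general (q : Fin 3 → Pt) (m : ℕ)
    (u v utilde v' : Pt → ℝ)
    (hu : ∀ x ∈ V q m, utilde x = u x)
    (hharm : ∀ (ω : Fin m → Fin 3) (i j k : Fin 3), i ≠ j → j ≠ k → i ≠ k →
      utilde (Pw q m ω (Pmap q i (q j))) =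
        2/5 * u (Pw q m ω (q i)) + 2/5 * u (Pw q m ω (q j)) + 1/5 * u (Pw q m ω (q k)))
    (hv : ∀ x ∈ V q m, v' x = v x) :
    energyBil q (m+1) utilde v' = energyBil q m u v := by
  have hvertex (ω : Fin m → Fin 3) (i : Fin 3) : utilde (Pw q m ω (q i)) = u (Pw q m ω (q i)) :=
    hu _ ⟨ω, i, rfl⟩
  rw [energyBil_succ_of_harmonic q m utilde v' fun ω i j k hij hjk hik => by
    rw [hharm ω i j k hij hjk hik, hvertex, hvertex, hvertex]]
  exact energyBil_congr q m hu hv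

/-- the bilinear energy of a harmonic extension against any extension
is unchanged: `E_{m+1}(ũ, v′) = E_m(u, v)`. -/
theorem stmt_0 (q : Fin 3 → Pt) (hq : AffineIndependent ℝ q) (m : ℕ)
    (u v utilde v' : Pt → ℝ)
    (hu : ∀ x ∈ V q m, utilde x = u x)
    (hharm : ∀ (ω : Fin m → Fin 3) (i j k : Fin 3), i ≠ j → j ≠ k → i ≠ k →
      utilde (Pw q m ω (Pmap q i (q j))) =
        2/5 * u (Pw q m ω (q i)) + 2/5 * u (Pw q m ω (q j)) + 1/5 * u (Pw q m ω (q k)))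
    (hv : ∀ x ∈ V q m, v' x = v x) :
    energyBil q (m+1) utilde v' = energyBil q m u v :=
  stmt_0_general q m u v utilde v' hu hharm hv

end
end

section
/- Let h be a harmonic function on SG and let (i,j,k) be a permutation of (1,2,3). Then for every positive integer m, h(P_i^m(q_j)) + h(P_i^m(q_k)) = 2h(q_i) + (3/5)^m·(h(q_j) + h(q_k) − 2h(q_i)), where P_i^m denotes the m-fold iterate of P_i. -/
open Finset Filter

noncomputable section

lemma Pw_const (q : Fin 3 → Pt) (i : Fin 3) (x : Pt) (m : ℕ) :
    Pw q m (fun _ => i) x = (Pmap q i)^[m] x := by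
  induction m with
  | zero => rfl
  | succ n ih =>
    show Pmap q i (Pw q n (fun _ => i) x) = _
    rw [ih, Function.iterate_succ_apply']

namespace IsHarmonic

variable {q : Fin 3 → Pt} {h : Pt → ℝ} {i j k : Fin 3}

lemma apply_iterate_Pmap_succ (hh : IsHarmonic q h) (hij : i ≠ j) (hjk : j ≠ k) (hik : i ≠ k)
    (n : ℕ) :
    h ((Pmap q i)^[n + 1] (q j)) =
      2/5 * h (q i) + 2/5 * h ((Pmap q i)^[n] (q j)) + 1/5 * h ((Pmap q i)^[n] (q k)) := by
  have rule := hh.2 n (fun _ => i) i j k hij hjk hik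
  simp only [Pw_const] at rule
  rwa [Function.iterate_fixed (Pmap_self q i), ← Function.iterate_succ_apply] at rule

lemma apply_iterate_Pmap_add (hh : IsHarmonic q h) (hij : i ≠ j) (hjk : j ≠ k) (hik : i ≠ k)
    (n : ℕ) :
    h ((Pmap q i)^[n] (q j)) + h ((Pmap q i)^[n] (q k)) - 2 * h (q i) =
      (3/5 : ℝ)^n * (h (q j) + h (q k) - 2 * h (q i)) := by
  induction n with
  | zero => simp
  | succ n ih =>
    rw [hh.apply_iterate_Pmap_succ hij hjk hik, hh.apply_iterate_Pmap_succ hik hjk.symm hij,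
      pow_succ]
    linarith

end IsHarmonic

theorem stmt_6_general (q : Fin 3 → Pt)
    (h : Pt → ℝ) (hh : IsHarmonic q h)
    (i j k : Fin 3) (hij : i ≠ j) (hjk : j ≠ k) (hik : i ≠ k) :
    ∀ m : ℕ, 1 ≤ m →
      h ((Pmap q i)^[m] (q j)) + h ((Pmap q i)^[m] (q k)) =
        2 * h (q i) + (3/5 : ℝ)^m * (h (q j) + h (q k) - 2 * h (q i)) := by
  intro m _
  linarith [hh.apply_iterate_Pmap_add hij hjk hik m]

/-- for a harmonic function `h` on SG and a permutation `(i,j,k)`,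
`h(P_i^m(q_j)) + h(P_i^m(q_k)) = 2h(q_i) + (3/5)^m (h(q_j)+h(q_k)-2h(q_i))`. -/
theorem stmt_6 (q : Fin 3 → Pt) (hq : AffineIndependent ℝ q)
    (h : Pt → ℝ) (hh : IsHarmonic q h)
    (i j k : Fin 3) (hij : i ≠ j) (hjk : j ≠ k) (hik : i ≠ k) :
    ∀ m : ℕ, 1 ≤ m →
      h ((Pmap q i)^[m] (q j)) + h ((Pmap q i)^[m] (q k)) =
        2 * h (q i) + (3/5 : ℝ)^m * (h (q j) + h (q k) - 2 * h (q i)) :=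
  stmt_6_general q h hh i j k hij hjk hik

end
end

section
/- Let a₁, a₂, a₃, η be real numbers, and let u be an FIF on SG with uniform vertical scaling factor d = 1/5 such that u(q_i) = a_i for i = 1,2,3 and u(P_i(q_j)) = (1/5)·(2a_i + 2a_j + a_{6−i−j} − η/3) for all distinct i, j ∈ {1,2,3}. Then (3/2)·5^m·Δ_m u converges to the constant η uniformly on V_*∖V₀ as m → ∞; in particular Δu(p) = η for every p ∈ V_*∖V₀. -/
open Finset Filter

noncomputable section

/-!
Write `F_w` for the composition of the contractions along a word `w`. Since `u ∘ P_c = u / 5 + h_c`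
with `h_c` harmonic, the prescribed level-one values propagate: on every cell `F_w(SG)`, `u` obeys
the `1/5–2/5` rule up to the defect `(η/15)·5^{-|w|}`. Barycentric coordinates with respect to
`q` show that a point of `V_m ∖ V₀` is a vertex of exactly two level-`m` cells, `τ i j⋯j` and
`τ j i⋯i`, which meet at `F_τ(P_i q_j)`, so `Δ_m u` there is the sum of the contributions of
these two cells. Refining both cells by one level multiplies that sum by `3/5` and subtracts twice
the defect; by induction `Δ_m u = (2/3)·η·5^{-m}` exactly, and `(3/2)·5^m·Δ_m u` is identically `η`
on `V_m ∖ V₀`.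
-/

lemma List.eq_replicate_or_eq_append_cons_replicate {α : Type*} (l : List α) (a : α) :
    l = List.replicate l.length a ∨ ∃ τ i t, i ≠ a ∧ l = τ ++ i :: List.replicate t a := by
  induction l with
  | nil => exact Or.inl rfl
  | cons c l ih =>
    rcases ih with h | ⟨τ, i, t, hia, h⟩
    · obtain rfl | hca := eq_or_ne c a
      · exact Or.inl (by rw [List.length_cons, List.replicate_succ, ← h])
      · exact Or.inr ⟨[], c, l.length, hca, by rw [List.nil_append, ← h]⟩
    · exact Or.inr ⟨c :: τ, i, t, hia, by rw [h, List.cons_append]⟩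

lemma List.exists_ofFn_eq {α : Type*} {l : List α} {n : ℕ} (h : l.length = n) :
    ∃ f : Fin n → α, List.ofFn f = l := by
  subst h
  exact ⟨l.get, List.ofFn_get l⟩

lemma Fin.sum_univ_three_of_ne {M : Type*} [AddCommMonoid M] (f : Fin 3 → M) {i j k : Fin 3}
    (hij : i ≠ j) (hjk : j ≠ k) (hik : i ≠ k) : ∑ l, f l = f i + f j + f k := by
  have huniv : (Finset.univ : Finset (Fin 3)) = {i, j, k} := by
    revert i j k; decide
  rw [huniv, Finset.sum_insert (by simp [hij, hik]), Finset.sum_pair hjk, add_assoc]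

section

variable {q : Fin 3 → Pt}

@[simp] lemma Pmap_vertex (i : Fin 3) : Pmap q i (q i) = q i := by
  funext t
  simp only [Pmap, Pi.div_apply, Pi.add_apply, Pi.ofNat_apply]
  ring

lemma Pmap_vertex_comm (i j : Fin 3) : Pmap q i (q j) = Pmap q j (q i) := by
  rw [Pmap, Pmap, add_comm]

lemma Pmap_injective (c : Fin 3) : Function.Injective (Pmap q c) := by
  intro x y h
  funext t
  have := congrFun h t
  simp only [Pmap, Pi.div_apply, Pi.add_apply, Pi.ofNat_apply] at this
  linarith

def wordMap (q : Fin 3 → Pt) (l : List (Fin 3)) (x : Pt) : Pt := l.foldr (Pmap q) x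

@[simp] lemma wordMap_nil (x : Pt) : wordMap q [] x = x := rfl

@[simp] lemma wordMap_cons (c : Fin 3) (l : List (Fin 3)) (x : Pt) :
    wordMap q (c :: l) x = Pmap q c (wordMap q l x) := rfl

lemma wordMap_append (l₁ l₂ : List (Fin 3)) (x : Pt) :
    wordMap q (l₁ ++ l₂) x = wordMap q l₁ (wordMap q l₂ x) :=
  List.foldr_append

@[simp] lemma wordMap_replicate_vertex (t : ℕ) (j : Fin 3) :
    wordMap q (List.replicate t j) (q j) = q j := by
  induction t with
  | zero => rfl
  | succ t ih => rw [List.replicate_succ, wordMap_cons, ih, Pmap_vertex]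

lemma wordMap_junction (τ : List (Fin 3)) (i j : Fin 3) (t : ℕ) :
    wordMap q (τ ++ i :: List.replicate t j) (q j) = wordMap q τ (Pmap q i (q j)) := by
  rw [wordMap_append, wordMap_cons, wordMap_replicate_vertex]

lemma Pw_eq_wordMap (m : ℕ) (ω : Fin m → Fin 3) (x : Pt) :
    Pw q m ω x = wordMap q (List.ofFn ω) x := by
  induction m with
  | zero => rfl
  | succ m ih => rw [List.ofFn_succ, wordMap_cons, ← ih]; rfl

lemma mem_V_iff {m : ℕ} {x : Pt} :
    x ∈ V q m ↔ ∃ l : List (Fin 3), l.length = m ∧ ∃ a, x = wordMap q l (q a) := by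
  constructor
  · rintro ⟨ω, a, rfl⟩
    exact ⟨List.ofFn ω, List.length_ofFn, a, Pw_eq_wordMap m ω _⟩
  · rintro ⟨l, rfl, a, rfl⟩
    exact ⟨l.get, a, by rw [Pw_eq_wordMap, List.ofFn_get]⟩

lemma V_mono {m n : ℕ} (h : m ≤ n) : V q m ⊆ V q n := by
  intro x hx
  obtain ⟨l, rfl, a, rfl⟩ := mem_V_iff.1 hx
  obtain ⟨k, rfl⟩ := Nat.exists_eq_add_of_le h
  refine mem_V_iff.2 ⟨l ++ List.replicate k a, by simp, a, ?_⟩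
  rw [wordMap_append, wordMap_replicate_vertex]

lemma wordMap_vertex_mem_SG (l : List (Fin 3)) (a : Fin 3) : wordMap q l (q a) ∈ SG q :=
  subset_closure (Set.mem_iUnion.2 ⟨_, mem_V_iff.2 ⟨l, rfl, a, rfl⟩⟩)

lemma wordMap_Pmap_vertex_mem_SG (l : List (Fin 3)) (i j : Fin 3) :
    wordMap q l (Pmap q i (q j)) ∈ SG q :=
  wordMap_junction l i j 0 ▸ wordMap_vertex_mem_SG _ j

lemma exists_junction_of_mem_V {m : ℕ} {x : Pt} (hx : x ∈ V q m) (hx0 : x ∉ V q 0) :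
    ∃ τ i j t, i ≠ j ∧ m = τ.length + 1 + t ∧ x = wordMap q τ (Pmap q i (q j)) := by
  obtain ⟨l, rfl, a, rfl⟩ := mem_V_iff.1 hx
  rcases List.eq_replicate_or_eq_append_cons_replicate l a with hl | ⟨τ, i, t, hia, rfl⟩
  · refine absurd (mem_V_iff.2 ⟨[], rfl, a, ?_⟩) hx0
    rw [hl, wordMap_replicate_vertex, wordMap_nil]
  · exact ⟨τ, i, a, t, hia, by simp; omega, wordMap_junction τ i a t⟩

section Barycentric

variable (hq : AffineIndependent ℝ q)

def vertexBasis : AffineBasis (Fin 3) ℝ Pt :=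
  ⟨q, hq, by
    rw [hq.affineSpan_eq_top_iff_card_eq_finrank_add_one]
    simp⟩

lemma coord_vertex (t c : Fin 3) :
    (vertexBasis hq).coord t (q c) = if t = c then 1 else 0 :=
  (vertexBasis hq).coord_apply t c

lemma coord_Pmap (t c : Fin 3) (x : Pt) :
    (vertexBasis hq).coord t (Pmap q c x) =
      ((vertexBasis hq).coord t x + if t = c then 1 else 0) / 2 := by
  have hmid : Pmap q c x = midpoint ℝ x (q c) := by
    funext s
    simp only [Pmap, midpoint_eq_smul_add, Pi.div_apply, Pi.add_apply, Pi.ofNat_apply,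
      Pi.smul_apply, smul_eq_mul, invOf_eq_inv]
    ring
  rw [hmid, AffineMap.map_midpoint, midpoint_eq_smul_add, coord_vertex, smul_eq_mul,
    invOf_eq_inv]
  ring

lemma coord_wordMap_nonneg (l : List (Fin 3)) (a t : Fin 3) :
    0 ≤ (vertexBasis hq).coord t (wordMap q l (q a)) := by
  induction l with
  | nil => rw [wordMap_nil, coord_vertex]; split_ifs <;> norm_num
  | cons c l ih => rw [wordMap_cons, coord_Pmap]; split_ifs <;> positivity

variable {hq}

lemma coord_le_one {y : Pt} (hy : ∀ t, 0 ≤ (vertexBasis hq).coord t y) (c : Fin 3) :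
    (vertexBasis hq).coord c y ≤ 1 :=
  (vertexBasis hq).sum_coord_apply_eq_one y ▸
    Finset.single_le_sum (fun t _ => hy t) (Finset.mem_univ c)

lemma eq_vertex_of_coord_eq_one {y : Pt} (hy : ∀ t, 0 ≤ (vertexBasis hq).coord t y)
    {c : Fin 3} (hc : (vertexBasis hq).coord c y = 1) : y = q c := by
  have hsum := (vertexBasis hq).sum_coord_apply_eq_one y
  rw [← Finset.add_sum_erase _ _ (Finset.mem_univ c), hc, add_eq_left,
    Finset.sum_eq_zero_iff_of_nonneg (fun t _ => hy t)] at hsum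
  refine (vertexBasis hq).ext_elem fun t => ?_
  rw [coord_vertex]
  split_ifs with htc
  · rwa [htc]
  · exact hsum t (Finset.mem_erase.2 ⟨htc, Finset.mem_univ t⟩)

lemma eq_vertex_of_Pmap_eq_Pmap {c d : Fin 3} (hcd : c ≠ d) {y z : Pt}
    (hy : ∀ t, 0 ≤ (vertexBasis hq).coord t y) (hz : ∀ t, 0 ≤ (vertexBasis hq).coord t z)
    (h : Pmap q c y = Pmap q d z) : z = q c := by
  have hc := congrArg ((vertexBasis hq).coord c) h
  rw [coord_Pmap, coord_Pmap, if_pos rfl, if_neg hcd] at hc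
  have := coord_le_one hz c
  exact eq_vertex_of_coord_eq_one hz (by linarith [hy c])

/-- Distinct first-level cells meet only in their common vertex. -/
lemma Pmap_eq_Pmap_of_ne {c d : Fin 3} (hcd : c ≠ d) {y z : Pt}
    (hy : ∀ t, 0 ≤ (vertexBasis hq).coord t y) (hz : ∀ t, 0 ≤ (vertexBasis hq).coord t z)
    (h : Pmap q c y = Pmap q d z) : y = q d ∧ z = q c :=
  ⟨eq_vertex_of_Pmap_eq_Pmap hcd.symm hz hy h.symm, eq_vertex_of_Pmap_eq_Pmap hcd hy hz h⟩

end Barycentric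

lemma wordMap_eq_vertex (hq : AffineIndependent ℝ q) {l : List (Fin 3)} {a c : Fin 3}
    (h : wordMap q l (q a) = q c) : l = List.replicate l.length c ∧ a = c := by
  induction l with
  | nil => exact ⟨rfl, hq.injective h⟩
  | cons e l ih =>
    rw [wordMap_cons, ← Pmap_vertex (q := q) c] at h
    obtain rfl | hec := eq_or_ne e c
    · obtain ⟨hl, rfl⟩ := ih (Pmap_injective e h)
      exact ⟨by rw [List.length_cons, List.replicate_succ, ← hl], rfl⟩
    · obtain ⟨-, hce⟩ := Pmap_eq_Pmap_of_ne hec (coord_wordMap_nonneg hq l a)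
        (coord_wordMap_nonneg hq [] c) h
      exact absurd (hq.injective hce).symm hec

lemma eq_junction_of_wordMap_eq (hq : AffineIndependent ℝ q) {i j : Fin 3} (hij : i ≠ j)
    (t : ℕ) (τ : List (Fin 3)) {l : List (Fin 3)} {b : Fin 3}
    (hl : l.length = τ.length + 1 + t) (h : wordMap q l (q b) = wordMap q τ (Pmap q i (q j))) :
    (l = τ ++ i :: List.replicate t j ∧ b = j) ∨ (l = τ ++ j :: List.replicate t i ∧ b = i) := by
  induction τ generalizing l with
  | nil =>
    obtain _ | ⟨d, l⟩ := l
    · simp only [List.length_nil] at hl; omega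
    rw [wordMap_cons, wordMap_nil] at h
    replace hl : l.length = t := by simp only [List.length_cons, List.length_nil] at hl; omega
    obtain rfl | hdi := eq_or_ne d i
    · obtain ⟨hrep, rfl⟩ := wordMap_eq_vertex hq (Pmap_injective d h)
      exact Or.inl ⟨by rw [hrep, hl, List.nil_append], rfl⟩
    · obtain ⟨hy, hdj⟩ := Pmap_eq_Pmap_of_ne hdi (coord_wordMap_nonneg hq l b)
        (coord_wordMap_nonneg hq [] j) h
      obtain ⟨hrep, rfl⟩ := wordMap_eq_vertex hq hy
      obtain rfl := hq.injective hdj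
      exact Or.inr ⟨by rw [hrep, hl, List.nil_append], rfl⟩
  | cons c τ ih =>
    obtain _ | ⟨d, l⟩ := l
    · simp only [List.length_nil, List.length_cons] at hl; omega
    rw [wordMap_cons, wordMap_cons] at h
    simp only [List.length_cons] at hl
    obtain rfl | hdc := eq_or_ne d c
    · simpa using ih (by omega) (Pmap_injective d h)
    · rw [← wordMap_junction τ i j 0] at h
      obtain ⟨-, hτ⟩ := Pmap_eq_Pmap_of_ne hdc (coord_wordMap_nonneg hq l b)
        (coord_wordMap_nonneg hq _ j) h
      obtain ⟨hrep, hjd⟩ := wordMap_eq_vertex hq hτ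
      have hi : i ∈ List.replicate _ d := hrep ▸ List.mem_append_right τ List.mem_cons_self
      exact absurd ((List.eq_of_mem_replicate hi).trans hjd.symm) hij

open scoped Classical in
/-- The `k = b` term of the inner sum is `u x - u x = 0`, so it may be added back. -/
lemma graphLap_eq_sum_ite (m : ℕ) (u : Pt → ℝ) (x : Pt) :
    graphLap q m u x = ∑ ω, ∑ b,
      if Pw q m ω (q b) = x then ∑ k, (u (Pw q m ω (q k)) - u x) else 0 := by
  refine Finset.sum_congr rfl fun ω _ => ?_
  rw [Finset.sum_filter, Fintype.sum_prod_type]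
  refine Finset.sum_congr rfl fun b _ => ?_
  split_ifs with hb
  · refine Finset.sum_congr rfl fun k _ => ?_
    rw [if_congr (and_iff_left hb) rfl rfl, ite_eq_left_iff, not_not]
    intro hbk
    rw [← show b = k from hbk, hb, sub_self]
  · exact Finset.sum_eq_zero fun k _ => if_neg fun h => hb h.2

lemma graphLap_eq_add_of_fiber {m : ℕ} {x : Pt} {ω₁ ω₂ : Fin m → Fin 3} {b₁ b₂ : Fin 3}
    (hne : ω₁ ≠ ω₂)
    (hfiber : ∀ ω b, Pw q m ω (q b) = x ↔ (ω = ω₁ ∧ b = b₁) ∨ (ω = ω₂ ∧ b = b₂))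
    (u : Pt → ℝ) :
    graphLap q m u x =
      ∑ k, (u (Pw q m ω₁ (q k)) - u x) + ∑ k, (u (Pw q m ω₂ (q k)) - u x) := by
  classical
  rw [graphLap_eq_sum_ite, Fintype.sum_eq_add ω₁ ω₂ hne]
  · simp [hfiber, hne, hne.symm]
  · rintro ω ⟨h₁, h₂⟩
    simp [hfiber, h₁, h₂]

/-- The contribution of the cell `F_l(SG)` to the graph Laplacian at its vertex `F_l(q_j)`. -/
def cellDefect (q : Fin 3 → Pt) (u : Pt → ℝ) (l : List (Fin 3)) (j : Fin 3) : ℝ :=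
  ∑ k, (u (wordMap q l (q k)) - u (wordMap q l (q j)))

lemma graphLap_junction (hq : AffineIndependent ℝ q) (u : Pt → ℝ) (τ : List (Fin 3))
    {i j : Fin 3} (hij : i ≠ j) (t : ℕ) :
    graphLap q (τ.length + 1 + t) u (wordMap q τ (Pmap q i (q j))) =
      cellDefect q u (τ ++ i :: List.replicate t j) j +
        cellDefect q u (τ ++ j :: List.replicate t i) i := by
  have hlen : ∀ a b : Fin 3, (τ ++ a :: List.replicate t b).length = τ.length + 1 + t := by
    simp; omega
  obtain ⟨ωA, hωA⟩ := List.exists_ofFn_eq (hlen i j)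
  obtain ⟨ωB, hωB⟩ := List.exists_ofFn_eq (hlen j i)
  have hxA := wordMap_junction (q := q) τ i j t
  have hxB : wordMap q (τ ++ j :: List.replicate t i) (q i) = wordMap q τ (Pmap q i (q j)) := by
    rw [wordMap_junction, Pmap_vertex_comm]
  rw [graphLap_eq_add_of_fiber (ω₁ := ωA) (ω₂ := ωB) (b₁ := j) (b₂ := i)]
  · simp only [cellDefect, Pw_eq_wordMap, hωA, hωB, hxA, hxB]
  · rintro rfl
    exact hij (List.cons.inj (List.append_cancel_left (hωA.symm.trans hωB))).1
  · intro ω b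
    rw [Pw_eq_wordMap, ← List.ofFn_inj (f := ω) (g := ωA), ← List.ofFn_inj (g := ωB), hωA, hωB]
    constructor
    · exact eq_junction_of_wordMap_eq hq hij t τ (by simp)
    · rintro (⟨h, rfl⟩ | ⟨h, rfl⟩) <;> rw [h]
      exacts [hxA, hxB]

lemma IsHarmonic.wordMap_Pmap {h : Pt → ℝ} (hh : IsHarmonic q h) (l : List (Fin 3))
    {i j k : Fin 3} (hij : i ≠ j) (hjk : j ≠ k) (hik : i ≠ k) :
    h (wordMap q l (Pmap q i (q j))) =
      2/5 * h (wordMap q l (q i)) + 2/5 * h (wordMap q l (q j)) +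
        1/5 * h (wordMap q l (q k)) := by
  simpa only [Pw_eq_wordMap, List.ofFn_get] using hh.2 l.length l.get i j k hij hjk hik

def HasHarmonicDefect (q : Fin 3 → Pt) (d δ : ℝ) (u : Pt → ℝ) : Prop :=
  ∀ (l : List (Fin 3)) (i j k : Fin 3), i ≠ j → j ≠ k → i ≠ k →
    u (wordMap q l (Pmap q i (q j))) =
      2/5 * u (wordMap q l (q i)) + 2/5 * u (wordMap q l (q j)) +
        1/5 * u (wordMap q l (q k)) - δ * d ^ l.length

/-- The harmonic parts of an FIF satisfy the rule exactly, so the defect on a cell is only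
multiplied by the vertical scaling factor when passing to a subcell. -/
lemma IsFIF.hasHarmonicDefect {d δ : ℝ} {u : Pt → ℝ} (hu : IsFIF q (fun _ => d) u)
    (h₀ : ∀ i j k : Fin 3, i ≠ j → j ≠ k → i ≠ k →
      u (Pmap q i (q j)) = 2/5 * u (q i) + 2/5 * u (q j) + 1/5 * u (q k) - δ) :
    HasHarmonicDefect q d δ u := by
  obtain ⟨-, h, hh, hrel⟩ := hu
  intro l i j k hij hjk hik
  induction l with
  | nil => simpa using h₀ i j k hij hjk hik
  | cons c l ih =>
    simp only [wordMap_cons, List.length_cons]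
    rw [hrel c _ (wordMap_Pmap_vertex_mem_SG l i j), ih, (hh c).wordMap_Pmap l hij hjk hik,
      hrel c _ (wordMap_vertex_mem_SG l i), hrel c _ (wordMap_vertex_mem_SG l j),
      hrel c _ (wordMap_vertex_mem_SG l k)]
    ring

section Defect

variable {d δ : ℝ} {u : Pt → ℝ}

lemma cellDefect_append_singleton (hu : HasHarmonicDefect q d δ u) (w : List (Fin 3))
    (j : Fin 3) :
    cellDefect q u (w ++ [j]) j = 3/5 * cellDefect q u w j - 2 * δ * d ^ w.length := by
  obtain ⟨i, k, hij, hjk, hik⟩ : ∃ i k, i ≠ j ∧ j ≠ k ∧ i ≠ k := by revert j; decide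
  simp only [cellDefect, Fin.sum_univ_three_of_ne _ hij hjk hik, wordMap_append, wordMap_cons,
    wordMap_nil, Pmap_vertex]
  rw [hu w j i k hij.symm hik hjk, hu w j k i hjk hik.symm hij.symm]
  ring

lemma cellDefect_junction (hu : HasHarmonicDefect q d δ u) (τ : List (Fin 3)) {i j : Fin 3}
    (hij : i ≠ j) :
    cellDefect q u (τ ++ [i]) j + cellDefect q u (τ ++ [j]) i = 2 * δ * d ^ τ.length := by
  obtain ⟨k, hjk, hik⟩ : ∃ k, j ≠ k ∧ i ≠ k := by revert i j; decide
  simp only [cellDefect, Fin.sum_univ_three_of_ne _ hij hjk hik, wordMap_append, wordMap_cons,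
    wordMap_nil, Pmap_vertex, Pmap_vertex_comm j i]
  rw [hu τ i j k hij hjk hik, hu τ i k j hik hjk.symm hij, hu τ j k i hjk hik.symm hij.symm]
  ring

lemma cellDefect_junction_replicate (hu : HasHarmonicDefect q (1/5) δ u) (τ : List (Fin 3))
    {i j : Fin 3} (hij : i ≠ j) (t : ℕ) :
    cellDefect q u (τ ++ i :: List.replicate t j) j +
        cellDefect q u (τ ++ j :: List.replicate t i) i =
      10 * δ * (1/5) ^ (τ.length + 1 + t) := by
  induction t with
  | zero => rw [List.replicate_zero, List.replicate_zero, cellDefect_junction hu τ hij]; ring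
  | succ t ih =>
    have hsnoc : ∀ a b : Fin 3, τ ++ a :: List.replicate (t + 1) b =
        (τ ++ a :: List.replicate t b) ++ [b] := by simp [List.replicate_succ']
    rw [hsnoc, hsnoc, cellDefect_append_singleton hu, cellDefect_append_singleton hu]
    simp only [List.length_append, List.length_cons, List.length_replicate]
    linear_combination 3/5 * ih

end Defect

end

/-- the FIF with uniform vertical scaling factor `1/5`, boundary
values `a_i` and `u(P_i(q_j)) = (1/5)(2a_i + 2a_j + a_k - η/3)` has
`(3/2)·5^m·Δ_m u → η` uniformly on `V_* \ V₀`, and in particular `Δu(p) = η`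
pointwise.  Here `q 0, q 1, q 2` play the roles of `q₁, q₂, q₃`. -/
theorem stmt_11 (q : Fin 3 → Pt) (hq : AffineIndependent ℝ q)
    (a : Fin 3 → ℝ) (η : ℝ) (u : Pt → ℝ)
    (hu : IsFIF q (fun _ => (1/5 : ℝ)) u)
    (hbd : ∀ i, u (q i) = a i)
    (hval : ∀ i j k : Fin 3, i ≠ j → j ≠ k → i ≠ k →
      u (Pmap q i (q j)) = 1/5 * (2 * a i + 2 * a j + a k - η/3)) :
    (∀ ε > (0 : ℝ), ∃ N : ℕ, ∀ m ≥ N, ∀ x ∈ V q m \ V q 0,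
      |(3/2 : ℝ) * 5^m * graphLap q m u x - η| < ε) ∧
    (∀ p ∈ Vstar q \ V q 0,
      Filter.Tendsto (fun m : ℕ => (3/2 : ℝ) * 5^m * graphLap q m u p)
        Filter.atTop (nhds η)) := by
  have hdefect : HasHarmonicDefect q (1/5) (η/15) u :=
    hu.hasHarmonicDefect fun i j k hij hjk hik => by
      rw [hval i j k hij hjk hik, hbd, hbd, hbd]
      ring
  have hlap : ∀ m, ∀ x ∈ V q m \ V q 0, (3/2 : ℝ) * 5^m * graphLap q m u x = η := by
    rintro m x ⟨hx, hx0⟩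
    obtain ⟨τ, i, j, t, hij, rfl, rfl⟩ := exists_junction_of_mem_V hx hx0
    rw [graphLap_junction hq u τ hij t, cellDefect_junction_replicate hdefect τ hij t, div_pow,
      one_pow]
    field_simp
    ring
  refine ⟨fun ε hε => ⟨0, fun m _ x hx => by rwa [hlap m x hx, sub_self, abs_zero]⟩, ?_⟩
  rintro p ⟨hp, hp0⟩
  obtain ⟨m₀, hm₀⟩ := Set.mem_iUnion.1 hp
  exact tendsto_const_nhds.congr'
    ((eventually_ge_atTop m₀).mono fun m hm => (hlap m p ⟨V_mono hm hm₀, hp0⟩).symm)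
end
end
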